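/- Under the resistance-bound hypotheses, if $\gamma(v) > \min_{v'} \gamma(v')$, then $\lim_{\epsilon \to 0^+} \pi^\epsilon(v) = 0$; i.e., every stochastically stable state minimizes the stochastic potential $\gamma$. -/

import Mathlib

open Finset
open scoped ENNReal

variable {V : Type*} [Fintype V] [DecidableEq V]

/-- A spanning tree rooted at `v`, represented by its successor function `f`:
from every vertex there is a directed path `u → f u → f (f u) → ⋯` reaching `v`.
Its edge set is `{(u, f u) : u ≠ v}`, which has exactly `|V| - 1` edges. -/
def IsRootedTree (f : V → V) (v : V) : Prop := f v = v ∧ ∀ u, ∃ k, f^[k] u = v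

open Classical in
/-- The set of spanning trees rooted at `v`. -/
noncomputable def rootedTrees (v : V) : Finset (V → V) :=
  Finset.univ.filter (fun f => IsRootedTree f v)

/-- The weight `∏_{(u → u') ∈ T} K(u' ∣ u)` of a rooted tree (here `K u u'` denotes the
transition probability from `u` to `u'`). -/
noncomputable def treeWeight (K : V → V → ℝ) (v : V) (f : V → V) : ℝ :=
  ∏ u ∈ Finset.univ.erase v, K u (f u)

/-- The total resistance `∑_{(u → u') ∈ T} R(u → u')` of a rooted tree. -/
noncomputable def treeResist (R : V → V → ℝ≥0∞) (v : V) (f : V → V) : ℝ≥0∞ :=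
  ∑ u ∈ Finset.univ.erase v, R u (f u)

/-- `ε^r` for `r ∈ [0,∞]`, with `ε^∞ = 0`. -/
noncomputable def epow (ε : ℝ) (r : ℝ≥0∞) : ℝ := if r = ⊤ then 0 else ε ^ r.toReal

/-- The Markov-chain-tree weight `μ^ε(v) = ∑_{T ∈ 𝒯(v)} ∏_{(u→u') ∈ T} K^ε(u' ∣ u)`. -/
noncomputable def treeMu (K : V → V → ℝ) (v : V) : ℝ :=
  ∑ f ∈ rootedTrees v, treeWeight K v f

/-- The stochastic potential `γ(v) = min_{T ∈ 𝒯(v)} R(T)`. -/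
noncomputable def stochPot (R : V → V → ℝ≥0∞) (v : V) : ℝ≥0∞ :=
  (rootedTrees v).inf (treeResist R v)

/-- `k`-step transition probabilities of a kernel. -/
noncomputable def kerPow (K : V → V → ℝ) : ℕ → V → V → ℝ
  | 0 => fun v v' => if v = v' then 1 else 0
  | (k + 1) => fun v v' => ∑ u, K v u * kerPow K k u v'

/-- A kernel is ergodic (irreducible and aperiodic, i.e. primitive) if some power is
entrywise positive. -/
def IsErgodicKernel (K : V → V → ℝ) : Prop := ∃ m : ℕ, ∀ v v', 0 < kerPow K m v v'


lemma epow_nonneg {e : ℝ} (he : 0 ≤ e) (r : ℝ≥0∞) : 0 ≤ epow e r := by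
  unfold epow; split
  · exact le_rfl
  · exact Real.rpow_nonneg he _

lemma epow_pos {e : ℝ} (he : 0 < e) {r : ℝ≥0∞} (hr : r ≠ ⊤) : 0 < epow e r := by
  simp only [epow, hr, if_false]
  exact Real.rpow_pos_of_pos he _

lemma epow_le_epow {e : ℝ} (he0 : 0 < e) (he1 : e ≤ 1) {r s : ℝ≥0∞} (h : s ≤ r) :
    epow e r ≤ epow e s := by
  unfold epow
  rcases eq_or_ne r ⊤ with hr | hr
  · simp only [hr, if_true]
    split
    · exact le_rfl
    · exact Real.rpow_nonneg he0.le _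
  · have hs : s ≠ ⊤ := fun hs => hr (top_le_iff.mp (hs ▸ h))
    simp only [hr, hs, if_false]
    exact Real.rpow_le_rpow_of_exponent_ge he0 he1
      ((ENNReal.toReal_le_toReal hs hr).mpr h)

lemma epow_add {e : ℝ} (he : 0 < e) (a b : ℝ≥0∞) :
    epow e (a + b) = epow e a * epow e b := by
  rcases eq_or_ne a ⊤ with ha | ha
  · simp [epow, ha]
  rcases eq_or_ne b ⊤ with hb | hb
  · simp [epow, hb]
  · simp only [epow, ha, hb, ENNReal.add_eq_top, if_false, or_self]
    rw [ENNReal.toReal_add ha hb, Real.rpow_add he]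

lemma epow_sum {e : ℝ} (he : 0 < e) {ι : Type*} (s : Finset ι) (r : ι → ℝ≥0∞) :
    epow e (∑ i ∈ s, r i) = ∏ i ∈ s, epow e (r i) := by
  classical
  induction s using Finset.cons_induction with
  | empty => simp [epow]
  | cons i s hi ih => rw [Finset.sum_cons, Finset.prod_cons, epow_add he, ih]

lemma rootedTrees_nonempty (v : V) : (rootedTrees v).Nonempty := by
  classical
  refine ⟨fun _ => v, ?_⟩
  simp only [rootedTrees, Finset.mem_filter, Finset.mem_univ, true_and]
  exact ⟨rfl, fun u => ⟨1, rfl⟩⟩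

/-- Under the resistance bounds, every stochastically stable state minimizes the stochastic
potential: if `γ(v) > min_{v'} γ(v')` then `π^ε(v) → 0` as `ε → 0⁺`. -/
theorem stmt9 (K : ℝ → V → V → ℝ) (R : V → V → ℝ≥0∞) (C1 C2 : ℝ)
    (hC1 : 0 < C1) (hC12 : C1 ≤ C2) (hcard : 2 ≤ Fintype.card V)
    (hbound : ∀ ε ∈ Set.Ioo (0 : ℝ) 1, ∀ v v',
      C1 * epow ε (R v v') ≤ K ε v v' ∧ K ε v v' ≤ C2 * epow ε (R v v'))
    (hstoch : ∀ ε ∈ Set.Ioo (0 : ℝ) 1, ∀ v, ∑ v', K ε v v' = 1)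
    (hergodic : ∀ ε ∈ Set.Ioo (0 : ℝ) 1, IsErgodicKernel (K ε))
    (pi : ℝ → V → ℝ)
    (hpi_pos : ∀ ε ∈ Set.Ioo (0 : ℝ) 1, ∀ v, 0 < pi ε v)
    (hpi_sum : ∀ ε ∈ Set.Ioo (0 : ℝ) 1, ∑ v, pi ε v = 1)
    (htree : ∀ ε ∈ Set.Ioo (0 : ℝ) 1, ∀ v v',
      pi ε v * treeMu (K ε) v' = pi ε v' * treeMu (K ε) v)
    (vstar : V) (hvstar : ∀ v, stochPot R vstar ≤ stochPot R v) :
    ∀ v : V, stochPot R vstar < stochPot R v →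
      Filter.Tendsto (fun ε => pi ε v) (nhdsWithin 0 (Set.Ioo (0 : ℝ) 1)) (nhds 0) :=  by
  classical
  intro v hv
  -- basic setup
  set m : ℕ := Fintype.card V - 1 with hmdef
  have hcardm : ∀ w : V, (Finset.univ.erase w).card = m := fun w => by
    rw [Finset.card_erase_of_mem (Finset.mem_univ w), Finset.card_univ]
  have hC2 : 0 < C2 := hC1.trans_le hC12
  have hvstar_top : stochPot R vstar ≠ ⊤ := (lt_of_lt_of_le hv le_top).ne
  -- nonnegativity of kernels and tree weights on (0,1)
  have hKnn : ∀ ε ∈ Set.Ioo (0:ℝ) 1, ∀ u u', 0 ≤ K ε u u' := by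
    intro ε hε u u'
    exact le_trans (mul_nonneg hC1.le (epow_nonneg hε.1.le _)) (hbound ε hε u u').1
  have wt_nonneg : ∀ ε ∈ Set.Ioo (0:ℝ) 1, ∀ w f, 0 ≤ treeWeight (K ε) w f := by
    intro ε hε w f
    exact Finset.prod_nonneg fun u _ => hKnn ε hε u (f u)
  -- upper bound on tree weights
  have wt_upper : ∀ ε ∈ Set.Ioo (0:ℝ) 1, ∀ w f,
      treeWeight (K ε) w f ≤ C2 ^ m * epow ε (treeResist R w f) := by
    intro ε hε w f
    calc treeWeight (K ε) w f
        ≤ ∏ u ∈ Finset.univ.erase w, (C2 * epow ε (R u (f u))) :=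
          Finset.prod_le_prod (fun u _ => hKnn ε hε u (f u))
            (fun u _ => (hbound ε hε u (f u)).2)
      _ = C2 ^ m * epow ε (treeResist R w f) := by
          rw [Finset.prod_mul_distrib, Finset.prod_const, hcardm w, treeResist,
            epow_sum hε.1]
  -- lower bound on tree weights
  have wt_lower : ∀ ε ∈ Set.Ioo (0:ℝ) 1, ∀ w f,
      C1 ^ m * epow ε (treeResist R w f) ≤ treeWeight (K ε) w f := by
    intro ε hε w f
    calc C1 ^ m * epow ε (treeResist R w f)
        = ∏ u ∈ Finset.univ.erase w, (C1 * epow ε (R u (f u))) := by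
          rw [Finset.prod_mul_distrib, Finset.prod_const, hcardm w, treeResist,
            epow_sum hε.1]
      _ ≤ treeWeight (K ε) w f :=
          Finset.prod_le_prod
            (fun u _ => mul_nonneg hC1.le (epow_nonneg hε.1.le _))
            (fun u _ => (hbound ε hε u (f u)).1)
  -- upper bound on treeMu
  have mu_upper : ∀ ε ∈ Set.Ioo (0:ℝ) 1, ∀ w,
      treeMu (K ε) w ≤ (rootedTrees w).card * (C2 ^ m * epow ε (stochPot R w)) := by
    intro ε hε w
    have : ∀ f ∈ rootedTrees w,
        treeWeight (K ε) w f ≤ C2 ^ m * epow ε (stochPot R w) := by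
      intro f hf
      refine le_trans (wt_upper ε hε w f) ?_
      have h1 : stochPot R w ≤ treeResist R w f := Finset.inf_le hf
      exact mul_le_mul_of_nonneg_left (epow_le_epow hε.1 hε.2.le h1)
        (pow_nonneg hC2.le m)
    calc treeMu (K ε) w ≤ ∑ _f ∈ rootedTrees w, C2 ^ m * epow ε (stochPot R w) :=
          Finset.sum_le_sum this
      _ = (rootedTrees w).card * (C2 ^ m * epow ε (stochPot R w)) := by
          rw [Finset.sum_const, nsmul_eq_mul]
  -- lower bound on treeMu at vstar
  obtain ⟨fstar, hfmem, hfeq⟩ :=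
    Finset.exists_mem_eq_inf (rootedTrees vstar) (rootedTrees_nonempty vstar)
      (treeResist R vstar)
  have mu_lower : ∀ ε ∈ Set.Ioo (0:ℝ) 1,
      C1 ^ m * epow ε (stochPot R vstar) ≤ treeMu (K ε) vstar := by
    intro ε hε
    have h1 : C1 ^ m * epow ε (stochPot R vstar) ≤ treeWeight (K ε) vstar fstar := by
      rw [stochPot, hfeq]
      exact wt_lower ε hε vstar fstar
    refine le_trans h1 ?_
    exact Finset.single_le_sum (fun f _ => wt_nonneg ε hε vstar f) hfmem
  have mu_pos : ∀ ε ∈ Set.Ioo (0:ℝ) 1, 0 < treeMu (K ε) vstar := by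
    intro ε hε
    exact lt_of_lt_of_le
      (mul_pos (pow_pos hC1 m) (epow_pos hε.1 hvstar_top)) (mu_lower ε hε)
  have hpile : ∀ ε ∈ Set.Ioo (0:ℝ) 1, pi ε vstar ≤ 1 := by
    intro ε hε
    rw [← hpi_sum ε hε]
    exact Finset.single_le_sum (fun i _ => (hpi_pos ε hε i).le) (Finset.mem_univ vstar)
  rcases eq_or_ne (stochPot R v) ⊤ with htop | htop
  · -- γ v = ⊤ : pi ε v = 0 on (0,1)
    have hz : ∀ ε ∈ Set.Ioo (0:ℝ) 1, pi ε v = 0 := by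
      intro ε hε
      have hmu0 : treeMu (K ε) v = 0 := by
        refine le_antisymm ?_ ?_
        · calc treeMu (K ε) v ≤ (rootedTrees v).card * (C2 ^ m * epow ε (stochPot R v)) :=
              mu_upper ε hε v
            _ = 0 := by simp [epow, htop]
        · exact Finset.sum_nonneg fun f _ => wt_nonneg ε hε v f
      have := htree ε hε v vstar
      rw [hmu0, mul_zero] at this
      exact (mul_eq_zero.mp this).resolve_right (mu_pos ε hε).ne'
    refine Filter.Tendsto.congr' ?_ tendsto_const_nhds
    exact Filter.eventually_of_mem self_mem_nhdsWithin fun ε hε => (hz ε hε).symm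
  · -- γ v < ⊤ : squeeze
    set a : ℝ := (stochPot R vstar).toReal
    set b : ℝ := (stochPot R v).toReal
    have hab : 0 < b - a := by
      have : a < b := (ENNReal.toReal_lt_toReal hvstar_top htop).mpr hv
      linarith
    set M : ℝ := (rootedTrees v).card * C2 ^ m / C1 ^ m with hMdef
    have key : ∀ ε ∈ Set.Ioo (0:ℝ) 1, pi ε v ≤ M * ε ^ (b - a) := by
      intro ε hε
      have hA : 0 < C1 ^ m * ε ^ a := by
        have : epow ε (stochPot R vstar) = ε ^ a := by simp [epow, hvstar_top]; rfl
        exact mul_pos (pow_pos hC1 m) (Real.rpow_pos_of_pos hε.1 a)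
      have hAle : C1 ^ m * ε ^ a ≤ treeMu (K ε) vstar := by
        have : epow ε (stochPot R vstar) = ε ^ a := by simp [epow, hvstar_top]; rfl
        rw [← this]; exact mu_lower ε hε
      have hB : pi ε v * treeMu (K ε) vstar ≤ (rootedTrees v).card * C2 ^ m * ε ^ b := by
        rw [htree ε hε v vstar]
        have h1 : treeMu (K ε) v ≤ (rootedTrees v).card * (C2 ^ m * ε ^ b) := by
          have heq : epow ε (stochPot R v) = ε ^ b := by simp [epow, htop]; rfl
          rw [← heq]; exact mu_upper ε hε v
        calc pi ε vstar * treeMu (K ε) v ≤ 1 * ((rootedTrees v).card * (C2 ^ m * ε ^ b)) := by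
              refine mul_le_mul (hpile ε hε) h1 ?_ zero_le_one
              exact Finset.sum_nonneg fun f _ => wt_nonneg ε hε v f
          _ = (rootedTrees v).card * C2 ^ m * ε ^ b := by ring
      have hMeq : M * ε ^ (b - a) =
          ((rootedTrees v).card * C2 ^ m * ε ^ b) / (C1 ^ m * ε ^ a) := by
        rw [Real.rpow_sub hε.1, hMdef, div_mul_div_comm]
      rw [hMeq, le_div_iff₀ hA]
      calc pi ε v * (C1 ^ m * ε ^ a) ≤ pi ε v * treeMu (K ε) vstar :=
            mul_le_mul_of_nonneg_left hAle (hpi_pos ε hε v).le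
        _ ≤ (rootedTrees v).card * C2 ^ m * ε ^ b := hB
    have hlim : Filter.Tendsto (fun ε : ℝ => M * ε ^ (b - a))
        (nhdsWithin 0 (Set.Ioo (0:ℝ) 1)) (nhds 0) := by
      have h1 : Filter.Tendsto (fun ε : ℝ => ε ^ (b - a)) (nhds (0:ℝ)) (nhds 0) := by
        have := (Real.continuousAt_rpow_const 0 (b - a) (Or.inr hab.le)).tendsto
        rwa [Real.zero_rpow hab.ne'] at this
      have h2 : Filter.Tendsto (fun ε : ℝ => ε ^ (b - a))
          (nhdsWithin 0 (Set.Ioo (0:ℝ) 1)) (nhds 0) :=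
        h1.mono_left nhdsWithin_le_nhds
      have := h2.const_mul M
      rwa [mul_zero] at this
    refine squeeze_zero' ?_ ?_ hlim
    · exact Filter.eventually_of_mem self_mem_nhdsWithin fun ε hε => (hpi_pos ε hε v).le
    · exact Filter.eventually_of_mem self_mem_nhdsWithin fun ε hε => key ε hε
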